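/- arXiv:2310.14826 — 3 statements merged into one kernel-verified Lean document; each statement's English description precedes it below -/
import Mathlib

section
/- If the loss class L = {ℓ_g : g ∈ G} is of VC-type with constant envelope U > 0 and parameters v ≥ 1, A ≥ 1, then the class H is of VC-type with constant envelope 2U and parameters ṽ = 4v + 1 and Ã = 6A. -/
open MeasureTheory

noncomputable section

/-- A class of real-valued functions is of VC-type with constant envelope `U > 0` and
parameters `v ≥ 1`, `A ≥ 1` if all its members are bounded by `U` and, for every probability
measure `Q` and every `ε ∈ (0,1)`, the class can be covered by at most `(A/ε)^v` closed
`L₂(Q)`-balls of radius `ε·U`. -/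
def IsVCType {S : Type*} [MeasurableSpace S] (F : Set (S → ℝ)) (U v A : ℝ) : Prop :=
  (∀ f ∈ F, ∀ x, |f x| ≤ U) ∧
    ∀ Q : Measure S, IsProbabilityMeasure Q → ∀ ε : ℝ, 0 < ε → ε < 1 →
      ∃ G : Finset (S → ℝ), (G.card : ℝ) ≤ (A / ε) ^ v ∧
        ∀ f ∈ F, ∃ g ∈ G, (∫ x, (f x - g x) ^ 2 ∂Q) ≤ (ε * U) ^ 2

/-- `p = P(Y = 1)`. -/
def pPos {𝒳 : Type*} [MeasurableSpace 𝒳] (P : Measure (𝒳 × ℝ)) : ℝ :=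
  (P {z | z.2 = 1}).toReal

/-- `P(f · 1{Y = 1})`. -/
def intPos {𝒳 : Type*} [MeasurableSpace 𝒳] (P : Measure (𝒳 × ℝ)) (f : 𝒳 × ℝ → ℝ) : ℝ :=
  ∫ z, (if z.2 = 1 then f z else 0) ∂P

/-- `P(f · 1{Y = -1})`. -/
def intNeg {𝒳 : Type*} [MeasurableSpace 𝒳] (P : Measure (𝒳 × ℝ)) (f : 𝒳 × ℝ → ℝ) : ℝ :=
  ∫ z, (if z.2 = -1 then f z else 0) ∂P

/-- `P₊(f) = E[f(X,Y) | Y = 1]`. -/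
def Pplus {𝒳 : Type*} [MeasurableSpace 𝒳] (P : Measure (𝒳 × ℝ)) (f : 𝒳 × ℝ → ℝ) : ℝ :=
  intPos P f / pPos P

/-- `P₋(f) = E[f(X,Y) | Y = -1]`. -/
def Pminus {𝒳 : Type*} [MeasurableSpace 𝒳] (P : Measure (𝒳 × ℝ)) (f : 𝒳 × ℝ → ℝ) : ℝ :=
  intNeg P f / (P {z | z.2 = -1}).toReal

/-- Conditional variance of `f(X,Y)` given `Y = 1`. -/
def VarPlus {𝒳 : Type*} [MeasurableSpace 𝒳] (P : Measure (𝒳 × ℝ)) (f : 𝒳 × ℝ → ℝ) : ℝ :=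
  Pplus P (fun z => f z ^ 2) - (Pplus P f) ^ 2

/-- Conditional variance of `f(X,Y)` given `Y = -1`. -/
def VarMinus {𝒳 : Type*} [MeasurableSpace 𝒳] (P : Measure (𝒳 × ℝ)) (f : 𝒳 × ℝ → ℝ) : ℝ :=
  Pminus P (fun z => f z ^ 2) - (Pminus P f) ^ 2

/-- Weighted probability `P_q(f) = (1/2)(q⁻¹ P(f·1{Y=1}) + (1-q)⁻¹ P(f·1{Y=-1}))`. -/
def Pw {𝒳 : Type*} [MeasurableSpace 𝒳] (P : Measure (𝒳 × ℝ)) (q : ℝ) (f : 𝒳 × ℝ → ℝ) : ℝ :=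
  (intPos P f / q + intNeg P f / (1 - q)) / 2

/-- Empirical measure of a sample: `P_n(f) = (1/n) ∑ f(X_i,Y_i)`. -/
def Pemp {𝒳 : Type*} {n : ℕ} (ω : Fin n → 𝒳 × ℝ) (f : 𝒳 × ℝ → ℝ) : ℝ :=
  (∑ i, f (ω i)) / n

/-- Empirical frequency of the positive class. -/
def pHat {𝒳 : Type*} {n : ℕ} (ω : Fin n → 𝒳 × ℝ) : ℝ :=
  Pemp ω fun z => if z.2 = 1 then 1 else 0

/-- `P_{n,+}(f) = P_n(f · 1{Y=1}) / p̂` (equal to `0` when `p̂ = 0`, since division by zero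
is zero in Lean). -/
def PempPos {𝒳 : Type*} {n : ℕ} (ω : Fin n → 𝒳 × ℝ) (f : 𝒳 × ℝ → ℝ) : ℝ :=
  Pemp ω (fun z => if z.2 = 1 then f z else 0) / pHat ω

/-- `P_{n,-}(f) = P_n(f · 1{Y=-1}) / (1 - p̂)`. -/
def PempNeg {𝒳 : Type*} {n : ℕ} (ω : Fin n → 𝒳 × ℝ) (f : 𝒳 × ℝ → ℝ) : ℝ :=
  Pemp ω (fun z => if z.2 = -1 then f z else 0) / (1 - pHat ω)

/-- Weighted empirical probability
`P_{n,q}(f) = (1/2)(q⁻¹ P_n(f·1{Y=1}) + (1-q)⁻¹ P_n(f·1{Y=-1}))`. -/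
def Pwemp {𝒳 : Type*} {n : ℕ} (ω : Fin n → 𝒳 × ℝ) (q : ℝ) (f : 𝒳 × ℝ → ℝ) : ℝ :=
  (Pemp ω (fun z => if z.2 = 1 then f z else 0) / q
    + Pemp ω (fun z => if z.2 = -1 then f z else 0) / (1 - q)) / 2

/-!
Write each element of `H` as `w_q · (ℓ_g - ℓ_{g*_q})`, where the weight `w_q` is `1 - q` on
`{Y = 1}` and `q` on `{Y = -1}`; then `|w_q| ≤ 1` and `q ↦ w_q` is `1`-Lipschitz. Cover the loss
class in `L₂(Q)` at radius `εU/2` by `N ≤ (2A/ε)^v` functions and `[0, 1]` by the grid `k/K`,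
`K = ⌈4/ε⌉`. By Minkowski's inequality `w_{k/K} · (f₁ - f₂)` is within `3εU/2 ≤ ε · 2U` of
`w_q · (ℓ_g - ℓ_{g*_q})`, and there are at most `N²(K + 1) ≤ (6A/ε)^(2v+1)` such functions.
-/

open Set

section L2

variable {S : Type*} [MeasurableSpace S] {Q : Measure S}

theorem MeasureTheory.MemLp.norm_toLp_eq_sqrt_integral_sq {F : S → ℝ} (hF : MemLp F 2 Q) :
    ‖hF.toLp F‖ = √(∫ x, F x ^ 2 ∂Q) := by
  rw [← Real.sqrt_sq (norm_nonneg _), ← real_inner_self_eq_norm_sq, L2.inner_def]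
  congr 1
  refine integral_congr_ae (hF.coeFn_toLp.mono fun x hx => ?_)
  simp [hx, sq]

theorem sqrt_integral_sq_add_le {F G : S → ℝ} (hF : MemLp F 2 Q) (hG : MemLp G 2 Q) :
    √(∫ x, (F x + G x) ^ 2 ∂Q) ≤ √(∫ x, F x ^ 2 ∂Q) + √(∫ x, G x ^ 2 ∂Q) := by
  have h := (hF.add hG).norm_toLp_eq_sqrt_integral_sq
  simp only [Pi.add_apply] at h
  rw [← h, ← hF.norm_toLp_eq_sqrt_integral_sq, ← hG.norm_toLp_eq_sqrt_integral_sq,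
    MemLp.toLp_add]
  exact norm_add_le _ _

theorem sqrt_integral_sq_sub_le {F G : S → ℝ} (hF : MemLp F 2 Q) (hG : MemLp G 2 Q) :
    √(∫ x, (F x - G x) ^ 2 ∂Q) ≤ √(∫ x, F x ^ 2 ∂Q) + √(∫ x, G x ^ 2 ∂Q) := by
  have h := (hF.sub hG).norm_toLp_eq_sqrt_integral_sq
  simp only [Pi.sub_apply] at h
  rw [← h, ← hF.norm_toLp_eq_sqrt_integral_sq, ← hG.norm_toLp_eq_sqrt_integral_sq,
    MemLp.toLp_sub]
  exact norm_sub_le _ _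

theorem aestronglyMeasurable_of_integrable_sq_of_integrable_sub_one_sq {w : S → ℝ}
    (h₀ : Integrable (fun x => w x ^ 2) Q) (h₁ : Integrable (fun x => (w x - 1) ^ 2) Q) :
    AEStronglyMeasurable w Q :=
  (((h₀.1.sub h₁.1).add (aestronglyMeasurable_const (b := (1 : ℝ)))).mul_const (2⁻¹ : ℝ)).congr
    (ae_of_all _ fun x => by simp only [Pi.add_apply, Pi.sub_apply]; ring)

theorem memLp_two_of_forall_integrable_sq
    (hQ : ∀ u : S → ℝ, Integrable (fun x => u x ^ 2) Q) (w : S → ℝ) : MemLp w 2 Q :=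
  (memLp_two_iff_integrable_sq
    (aestronglyMeasurable_of_integrable_sq_of_integrable_sub_one_sq (hQ w)
      (hQ fun x => w x - 1))).2 (hQ w)

/-- When some square is not integrable, a covering condition stated with Bochner integrals is met
through their junk value `0`: one of `f - 0, f - 1, f - u, f - (u + 1)` has a non-integrable
square, for otherwise `f` and `f - u`, hence `u`, would be in `L₂`. -/
theorem exists_finset_card_le_four_integral_sq_sub_eq_zero {u : S → ℝ}
    (hu : ¬ Integrable (fun x => u x ^ 2) Q) :
    ∃ C : Finset (S → ℝ), C.card ≤ 4 ∧ ∀ f : S → ℝ, ∃ g ∈ C, ∫ x, (f x - g x) ^ 2 ∂Q = 0 := by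
  classical
  refine ⟨{0, 1, u, u + 1}, Finset.card_le_four, fun f => ?_⟩
  by_contra! h
  have hint : ∀ g ∈ ({0, 1, u, u + 1} : Finset (S → ℝ)),
      Integrable (fun x => (f x - g x) ^ 2) Q := fun g hg => by
    by_contra hg'
    exact h g hg (integral_undef hg')
  have hf : MemLp f 2 Q := by
    have h₀ := hint 0 (by simp)
    have h₁ := hint 1 (by simp)
    simp only [Pi.zero_apply, sub_zero, Pi.one_apply] at h₀ h₁
    exact (memLp_two_iff_integrable_sq
      (aestronglyMeasurable_of_integrable_sq_of_integrable_sub_one_sq h₀ h₁)).2 h₀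
  have hfu : MemLp (fun x => f x - u x) 2 Q := by
    have h₀ := hint u (by simp)
    have h₁ := hint (u + 1) (by simp)
    simp only [Pi.add_apply, Pi.one_apply, ← sub_sub] at h₁
    exact (memLp_two_iff_integrable_sq
      (aestronglyMeasurable_of_integrable_sq_of_integrable_sub_one_sq h₀ h₁)).2 h₀
  exact hu ((hf.sub hfu).integrable_sq.congr (ae_of_all _ fun x => by simp))

variable [IsProbabilityMeasure Q]

theorem sqrt_integral_sq_mul_sub_mul_le (hQ : ∀ u : S → ℝ, MemLp u 2 Q)
    {w w' a b : S → ℝ} {δ c : ℝ} (hδ : 0 ≤ δ) (hc : 0 ≤ c)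
    (hw : ∀ x, |w x - w' x| ≤ δ) (hw' : ∀ x, |w' x| ≤ 1) (ha : ∀ x, |a x| ≤ c) :
    √(∫ x, (w x * a x - w' x * b x) ^ 2 ∂Q) ≤ δ * c + √(∫ x, (a x - b x) ^ 2 ∂Q) := by
  have hpt : ∀ x, (w x * a x - w' x * b x) ^ 2 ≤ (δ * c + |a x - b x|) ^ 2 := fun x => by
    have : |w x * a x - w' x * b x| ≤ δ * c + |a x - b x| :=
      calc |w x * a x - w' x * b x| = |(w x - w' x) * a x + w' x * (a x - b x)| := by ring_nf
        _ ≤ |w x - w' x| * |a x| + |w' x| * |a x - b x| := by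
          rw [← abs_mul, ← abs_mul]; exact abs_add_le _ _
        _ ≤ δ * c + 1 * |a x - b x| := by gcongr <;> simp only [hw, hw', ha]
        _ = δ * c + |a x - b x| := by rw [one_mul]
    simpa only [sq_abs] using pow_le_pow_left₀ (abs_nonneg _) this 2
  calc √(∫ x, (w x * a x - w' x * b x) ^ 2 ∂Q)
      ≤ √(∫ x, (δ * c + |a x - b x|) ^ 2 ∂Q) :=
        Real.sqrt_le_sqrt (integral_mono (hQ _).integrable_sq (hQ _).integrable_sq hpt)
    _ ≤ √(∫ _, (δ * c) ^ 2 ∂Q) + √(∫ x, |a x - b x| ^ 2 ∂Q) := sqrt_integral_sq_add_le (hQ _) (hQ _)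
    _ = δ * c + √(∫ x, (a x - b x) ^ 2 ∂Q) := by
      simp only [integral_const, probReal_univ, one_smul, sq_abs,
        Real.sqrt_sq (mul_nonneg hδ hc)]

end L2

theorem exists_le_abs_sub_div_le_inv {q : ℝ} (hq : q ∈ Icc 0 1) {K : ℕ} (hK : 0 < K) :
    ∃ k ≤ K, |q - k / K| ≤ (K : ℝ)⁻¹ := by
  have hK' : (0 : ℝ) < K := Nat.cast_pos.2 hK
  have hqK : 0 ≤ q * K := mul_nonneg hq.1 hK'.le
  refine ⟨⌊q * K⌋₊, Nat.floor_le_of_le ?_, ?_⟩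
  · simpa using mul_le_of_le_one_left hK'.le hq.2
  · have hfloor := Nat.floor_le hqK
    have hfloor' := Nat.lt_floor_add_one (q * K)
    rw [show q - ⌊q * K⌋₊ / K = (q * K - ⌊q * K⌋₊) / K by field_simp, abs_div,
      abs_of_pos hK', abs_of_nonneg (sub_nonneg.2 hfloor), inv_eq_one_div,
      div_le_div_iff_of_pos_right hK']
    linarith

theorem IsVCType.mono {S : Type*} [MeasurableSpace S] {F F' : Set (S → ℝ)} {U v A : ℝ}
    (hF : IsVCType F U v A) (h : F' ⊆ F) : IsVCType F' U v A :=
  ⟨fun f hf => hF.1 f (h hf), fun Q hQ ε hε₀ hε₁ =>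
    (hF.2 Q hQ ε hε₀ hε₁).imp fun _ hC => ⟨hC.1, fun f hf => hC.2 f (h hf)⟩⟩

theorem mul_self_mul_add_one_le_rpow {A ε v N : ℝ} {K : ℕ} (hA : 1 ≤ A) (hε₀ : 0 < ε)
    (hε₁ : ε < 1) (hv : 0 ≤ v) (hN₀ : 0 ≤ N) (hN : N ≤ (A / (ε / 2)) ^ v)
    (hK : (K : ℝ) < 4 / ε + 1) :
    N * N * (K + 1) ≤ (6 * A / ε) ^ (4 * v + 1) := by
  set B := 6 * A / ε
  have hB : 6 / ε ≤ B := div_le_div_of_nonneg_right (by linarith) hε₀.le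
  have hB1 : 1 ≤ B := le_trans (by rw [le_div_iff₀ hε₀]; linarith) hB
  have hNB : N ≤ B ^ v := by
    refine hN.trans (Real.rpow_le_rpow (by positivity) ?_ hv)
    rw [div_div_eq_mul_div]
    exact div_le_div_of_nonneg_right (by linarith) hε₀.le
  have hKB : (K : ℝ) + 1 ≤ B := by
    have : 2 ≤ 2 / ε := by rw [le_div_iff₀ hε₀]; linarith
    linarith [show 4 / ε + 2 / ε = 6 / ε by ring]
  calc N * N * (K + 1) ≤ B ^ v * B ^ v * B := by gcongr
    _ = B ^ (v + v + 1) := by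
      rw [Real.rpow_add (by linarith), Real.rpow_add (by linarith), Real.rpow_one]
    _ ≤ B ^ (4 * v + 1) := Real.rpow_le_rpow_of_exponent_le hB1 (by linarith)

section WeightedDifferences

variable {S : Type*} (w : ℝ → S → ℝ) (L : Set (S → ℝ))

def weightedDiffClass : Set (S → ℝ) :=
  {h | ∃ q ∈ Icc (0 : ℝ) 1, ∃ f ∈ L, ∃ f' ∈ L, h = fun x => w q x * (f x - f' x)}

variable {w L}

theorem abs_le_of_mem_weightedDiffClass (hw_le : ∀ t ∈ Icc (0 : ℝ) 1, ∀ x, |w t x| ≤ 1)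
    {U : ℝ} (hL : ∀ f ∈ L, ∀ x, |f x| ≤ U) : ∀ h ∈ weightedDiffClass w L, ∀ x, |h x| ≤ 2 * U := by
  rintro _ ⟨q, hq, f, hf, f', hf', rfl⟩ x
  rw [abs_mul, two_mul, ← one_mul (U + U)]
  exact mul_le_mul (hw_le q hq x) ((abs_sub _ _).trans (add_le_add (hL f hf x) (hL f' hf' x)))
    (abs_nonneg _) zero_le_one

theorem exists_finset_cover_weightedDiffClass [MeasurableSpace S] {Q : Measure S}
    [IsProbabilityMeasure Q] (hQ : ∀ u : S → ℝ, MemLp u 2 Q)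
    (hw_sub : ∀ q t x, |w q x - w t x| ≤ |q - t|) (hw_le : ∀ t ∈ Icc (0 : ℝ) 1, ∀ x, |w t x| ≤ 1)
    {U r : ℝ} (hU : 0 ≤ U) (hL : ∀ f ∈ L, ∀ x, |f x| ≤ U)
    {C : Finset (S → ℝ)} (hC : ∀ f ∈ L, ∃ g ∈ C, ∫ x, (f x - g x) ^ 2 ∂Q ≤ r ^ 2) (hr : 0 ≤ r)
    {K : ℕ} (hK : 0 < K) :
    ∃ D : Finset (S → ℝ), D.card ≤ C.card * C.card * (K + 1) ∧
      ∀ h ∈ weightedDiffClass w L, ∃ d ∈ D,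
        √(∫ x, (h x - d x) ^ 2 ∂Q) ≤ (K : ℝ)⁻¹ * (2 * U) + 2 * r := by
  classical
  refine ⟨((C ×ˢ C) ×ˢ Finset.range (K + 1)).image
    fun p x => w (p.2 / K) x * (p.1.1 x - p.1.2 x), ?_, ?_⟩
  · exact Finset.card_image_le.trans (by simp [Finset.card_product])
  rintro _ ⟨q, hq, f, hf, f', hf', rfl⟩
  obtain ⟨g, hg, hfg⟩ := hC f hf
  obtain ⟨g', hg', hfg'⟩ := hC f' hf'
  obtain ⟨k, hkK, hqk⟩ := exists_le_abs_sub_div_le_inv hq hK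
  have hk : (k / K : ℝ) ∈ Icc (0 : ℝ) 1 :=
    ⟨by positivity, div_le_one_of_le₀ (by exact_mod_cast hkK) (Nat.cast_nonneg _)⟩
  refine ⟨fun x => w (k / K) x * (g x - g' x),
    Finset.mem_image.2 ⟨((g, g'), k), by simp [hg, hg', Nat.lt_succ_of_le hkK], rfl⟩, ?_⟩
  calc √(∫ x, (w q x * (f x - f' x) - w (k / K) x * (g x - g' x)) ^ 2 ∂Q)
      ≤ (K : ℝ)⁻¹ * (2 * U) + √(∫ x, ((f x - f' x) - (g x - g' x)) ^ 2 ∂Q) :=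
        sqrt_integral_sq_mul_sub_mul_le hQ (by positivity) (by positivity)
          (fun x => (hw_sub _ _ x).trans hqk) (hw_le _ hk)
          (fun x => (abs_sub _ _).trans (by linarith [hL f hf x, hL f' hf' x]))
    _ = (K : ℝ)⁻¹ * (2 * U) + √(∫ x, ((f x - g x) - (f' x - g' x)) ^ 2 ∂Q) := by
        congr 3 with x
        ring
    _ ≤ (K : ℝ)⁻¹ * (2 * U) + (√(∫ x, (f x - g x) ^ 2 ∂Q) + √(∫ x, (f' x - g' x) ^ 2 ∂Q)) := by
        gcongr
        exact sqrt_integral_sq_sub_le (hQ _) (hQ _)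
    _ ≤ (K : ℝ)⁻¹ * (2 * U) + 2 * r := by
        linarith [(Real.sqrt_le_left hr).2 hfg, (Real.sqrt_le_left hr).2 hfg']

theorem isVCType_weightedDiffClass [MeasurableSpace S]
    (hw_sub : ∀ q t x, |w q x - w t x| ≤ |q - t|) (hw_le : ∀ t ∈ Icc (0 : ℝ) 1, ∀ x, |w t x| ≤ 1)
    {U v A : ℝ} (hU : 0 ≤ U) (hv : 0 ≤ v) (hA : 1 ≤ A) (hL : IsVCType L U v A) :
    IsVCType (weightedDiffClass w L) (2 * U) (4 * v + 1) (6 * A) := by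
  obtain ⟨hEnv, hCov⟩ := hL
  refine ⟨abs_le_of_mem_weightedDiffClass hw_le hEnv, fun Q _ ε hε₀ hε₁ => ?_⟩
  by_cases hQ : ∀ u : S → ℝ, Integrable (fun x => u x ^ 2) Q
  · obtain ⟨C, hCcard, hC⟩ := hCov Q ‹_› (ε / 2) (by positivity) (by linarith)
    set K := ⌈4 / ε⌉₊
    have hK : 4 / ε ≤ K := Nat.le_ceil _
    have hK₀ : 0 < K := Nat.cast_pos.1 ((by positivity : (0 : ℝ) < 4 / ε).trans_le hK)
    have hKε : (K : ℝ)⁻¹ ≤ ε / 4 := by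
      rw [inv_le_comm₀ (by positivity) (by positivity), inv_div]; exact hK
    obtain ⟨D, hDcard, hD⟩ := exists_finset_cover_weightedDiffClass
      (memLp_two_of_forall_integrable_sq hQ) hw_sub hw_le hU hEnv hC (by positivity) hK₀
    refine ⟨D, ?_, fun h hh => ?_⟩
    · calc (D.card : ℝ) ≤ C.card * C.card * (K + 1) := by exact_mod_cast hDcard
        _ ≤ _ := mul_self_mul_add_one_le_rpow hA hε₀ hε₁ hv (Nat.cast_nonneg _) hCcard
          (Nat.ceil_lt_add_one (by positivity))
    · obtain ⟨d, hd, hle⟩ := hD h hh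
      refine ⟨d, hd, (Real.sqrt_le_left (by positivity)).1 (hle.trans ?_)⟩
      nlinarith
  · obtain ⟨u, hu⟩ := not_forall.1 hQ
    obtain ⟨C, hC4, hC⟩ := exists_finset_card_le_four_integral_sq_sub_eq_zero hu
    refine ⟨C, ?_, fun h _ => ?_⟩
    · have hB : 6 ≤ 6 * A / ε := by rw [le_div_iff₀ hε₀]; nlinarith
      calc (C.card : ℝ) ≤ 4 := by exact_mod_cast hC4
        _ ≤ 6 * A / ε := by linarith
        _ ≤ _ := Real.self_le_rpow_of_one_le (by linarith) (by linarith)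
    · obtain ⟨d, hd, h0⟩ := hC h
      exact ⟨d, hd, h0.trans_le (by positivity)⟩

end WeightedDifferences

def classWeight (q y : ℝ) : ℝ :=
  if y = 1 then 1 - q else if y = -1 then q else 0

theorem classWeight_mul (q y a : ℝ) :
    (1 - q) * (if y = 1 then a else 0) + q * (if y = -1 then a else 0) = classWeight q y * a := by
  unfold classWeight
  by_cases h₁ : y = 1
  · norm_num [h₁]
  · by_cases h₂ : y = -1 <;> norm_num [h₁, h₂]

theorem abs_classWeight_sub_le (q t y : ℝ) : |classWeight q y - classWeight t y| ≤ |q - t| := by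
  unfold classWeight
  split_ifs
  · rw [show 1 - q - (1 - t) = t - q by ring, abs_sub_comm]
  · exact le_rfl
  · simp

theorem abs_classWeight_le_one {t : ℝ} (ht : t ∈ Icc 0 1) (y : ℝ) : |classWeight t y| ≤ 1 := by
  unfold classWeight
  split_ifs <;> rw [abs_le] <;> constructor <;> linarith [ht.1, ht.2]

theorem stmt_5_general {𝒳 : Type*} [MeasurableSpace 𝒳] (P : Measure (𝒳 × ℝ))
    (G : Set (𝒳 → ℝ)) (ℓ : ℝ → ℝ → ℝ) (U v A : ℝ)
    (hU : 0 < U) (hv : 1 ≤ v) (hA : 1 ≤ A)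
    (hVC : IsVCType {h | ∃ g ∈ G, h = fun z : 𝒳 × ℝ => ℓ (g z.1) z.2} U v A)
    (gstar : ℝ → 𝒳 → ℝ)
    (hgstar : ∀ q ∈ Set.Ioo (0 : ℝ) 1, gstar q ∈ G ∧
      ∀ g ∈ G, Pw P q (fun z : 𝒳 × ℝ => ℓ (gstar q z.1) z.2)
        ≤ Pw P q fun z : 𝒳 × ℝ => ℓ (g z.1) z.2) :
    IsVCType
      {h | ∃ q ∈ Set.Ioo (0 : ℝ) 1, ∃ g ∈ G,
        h = fun z : 𝒳 × ℝ =>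
          (1 - q) * (if z.2 = 1 then ℓ (g z.1) z.2 - ℓ (gstar q z.1) z.2 else 0)
            + q * (if z.2 = -1 then ℓ (g z.1) z.2 - ℓ (gstar q z.1) z.2 else 0)}
      (2 * U) (4 * v + 1) (6 * A) := by
  refine (isVCType_weightedDiffClass (w := fun q z => classWeight q z.2)
    (fun q t z => abs_classWeight_sub_le q t z.2) (fun t ht z => abs_classWeight_le_one ht z.2)
    hU.le (by linarith) hA hVC).mono ?_
  rintro _ ⟨q, hq, g, hg, rfl⟩
  refine ⟨q, Ioo_subset_Icc_self hq, _, ⟨g, hg, rfl⟩, _, ⟨gstar q, (hgstar q hq).1, rfl⟩, ?_⟩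
  simp_rw [classWeight_mul]

/-- Lemma: VC-property of the class `H`. If the loss class
`L = {ℓ_g : g ∈ G}` is of VC-type with envelope `U` and parameters `(v, A)`, then the class
`H = {(1-q)·(ℓ_g - ℓ_{g*_q})·1{Y=1} + q·(ℓ_g - ℓ_{g*_q})·1{Y=-1} : q ∈ (0,1), g ∈ G}`
is of VC-type with envelope `2U` and parameters `(4v+1, 6A)`. -/
theorem stmt_5 {𝒳 : Type*} [MeasurableSpace 𝒳] (P : Measure (𝒳 × ℝ))
    [IsProbabilityMeasure P]
    (G : Set (𝒳 → ℝ)) (ℓ : ℝ → ℝ → ℝ) (U v A : ℝ)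
    (hU : 0 < U) (hv : 1 ≤ v) (hA : 1 ≤ A)
    (hVC : IsVCType {h | ∃ g ∈ G, h = fun z : 𝒳 × ℝ => ℓ (g z.1) z.2} U v A)
    (gstar : ℝ → 𝒳 → ℝ)
    (hgstar : ∀ q ∈ Set.Ioo (0 : ℝ) 1, gstar q ∈ G ∧
      ∀ g ∈ G, Pw P q (fun z : 𝒳 × ℝ => ℓ (gstar q z.1) z.2)
        ≤ Pw P q fun z : 𝒳 × ℝ => ℓ (g z.1) z.2) :
    IsVCType
      {h | ∃ q ∈ Set.Ioo (0 : ℝ) 1, ∃ g ∈ G,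
        h = fun z : 𝒳 × ℝ =>
          (1 - q) * (if z.2 = 1 then ℓ (g z.1) z.2 - ℓ (gstar q z.1) z.2 else 0)
            + q * (if z.2 = -1 then ℓ (g z.1) z.2 - ℓ (gstar q z.1) z.2 else 0)}
      (2 * U) (4 * v + 1) (6 * A) :=
  stmt_5_general P G ℓ U v A hU hv hA hVC gstar hgstar

end
end

section
/- For every measurable ν : 𝒳 → ℝ, the classifier g(x) = sign(ν(x) − 1) satisfies R_bal(g) − R_bal(g*_p) = E[ 1{g(X) ≠ g*_p(X)} · |η(X) − p| / (p·(1 − p)) ], where g*_p is the balanced Bayes classifier. -/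
open MeasureTheory

noncomputable section

/-- `sign(t) = 1` if `t ≥ 0`, `-1` otherwise. -/
def sgn (t : ℝ) : ℝ := if 0 ≤ t then 1 else -1

/-- The (unnormalized) balanced 0-1 risk
`R_bal(g) = P(g(X) ≠ Y | Y = 1) + P(g(X) ≠ Y | Y = -1)`, with `P(Y = 1) = p` and
`P(Y = -1) = 1 - p`. -/
def Rbal {𝒳 : Type*} [MeasurableSpace 𝒳] (P : Measure (𝒳 × ℝ)) (p : ℝ)
    (g : 𝒳 → ℝ) : ℝ :=
  (P {z | g z.1 ≠ z.2 ∧ z.2 = 1}).toReal / p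
    + (P {z | g z.1 ≠ z.2 ∧ z.2 = -1}).toReal / (1 - p)

/-!
Disintegrating `P` along `X`, the balanced risk of `sgn ∘ f` is the `P_X`-integral of the
pointwise risk `η / p` (where `f < 0`) or `(1 - η) / (1 - p)` (where `0 ≤ f`). The Bayes
classifier picks the smaller of the two at every point, and where another classifier picks
differently the pointwise risks differ by `|η - p| / (p (1 - p))`.
-/

lemma sgn_ne_one_iff {t : ℝ} : sgn t ≠ 1 ↔ t < 0 := by
  unfold sgn; split_ifs with h <;> norm_num [h]; exact lt_of_not_ge h

lemma sgn_ne_neg_one_iff {t : ℝ} : sgn t ≠ -1 ↔ 0 ≤ t := by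
  unfold sgn; split_ifs with h <;> norm_num [h]

section TwoLabels

variable {𝒳 β : Type*} [MeasurableSpace 𝒳] [MeasurableSpace β] [MeasurableSingletonClass β]

lemma measurableSet_fst_mem_snd_eq {B : Set 𝒳} (hB : MeasurableSet B) (b : β) :
    MeasurableSet {z : 𝒳 × β | z.1 ∈ B ∧ z.2 = b} :=
  (measurable_fst hB).inter (measurable_snd (measurableSet_singleton b))

lemma measureReal_map_fst_eq_add {P : Measure (𝒳 × β)} [IsFiniteMeasure P] {a b : β}
    (hab : a ≠ b) (hsupp : ∀ᵐ z ∂P, z.2 = a ∨ z.2 = b) {B : Set 𝒳} (hB : MeasurableSet B) :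
    (P.map Prod.fst).real B = P.real {z | z.1 ∈ B ∧ z.2 = a} + P.real {z | z.1 ∈ B ∧ z.2 = b} := by
  have hsplit : Prod.fst ⁻¹' B ∩ {z : 𝒳 × β | z.2 = a ∨ z.2 = b} =
      {z | z.1 ∈ B ∧ z.2 = a} ∪ {z | z.1 ∈ B ∧ z.2 = b} := by
    ext z; simp only [Set.mem_inter_iff, Set.mem_preimage, Set.mem_ofPred_eq, Set.mem_union]
    tauto
  have hdisj : Disjoint {z : 𝒳 × β | z.1 ∈ B ∧ z.2 = a} {z | z.1 ∈ B ∧ z.2 = b} :=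
    Set.disjoint_left.2 fun z ha hb => hab (ha.2.symm.trans hb.2)
  rw [map_measureReal_apply measurable_fst hB,
    ← measureReal_union hdisj (measurableSet_fst_mem_snd_eq hB b), ← hsplit, measureReal_def,
    measureReal_def, measure_inter_conull hsupp]

end TwoLabels

/-- The risk, given `X = x` with `η x = e`, of predicting `sgn t`, in the balanced risk with
class weights `1 / p` and `1 / (1 - p)`. -/
def condBalancedRisk (p e t : ℝ) : ℝ := if 0 ≤ t then (1 - e) / (1 - p) else e / p

lemma condBalancedRisk_comp_eq_piecewise {𝒳 : Type*} (p : ℝ) (η f : 𝒳 → ℝ) :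
    (fun x => condBalancedRisk p (η x) (f x)) =
      {x | 0 ≤ f x}.piecewise (fun x => (1 - η x) / (1 - p)) (fun x => η x / p) := by
  funext x; simp [condBalancedRisk, Set.piecewise]

lemma condBalancedRisk_sub_bayes {p : ℝ} (hp0 : 0 < p) (hp1 : p < 1) (e t : ℝ) :
    condBalancedRisk p e t - condBalancedRisk p e (e / p - 1) =
      if sgn t ≠ sgn (e / p - 1) then |e - p| / (p * (1 - p)) else 0 := by
  have hbayes : 0 ≤ e / p - 1 ↔ p ≤ e := by rw [sub_nonneg, one_le_div hp0]
  have hq : 1 - p ≠ 0 := by linarith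
  unfold condBalancedRisk sgn
  simp only [hbayes]
  by_cases ht : 0 ≤ t <;> by_cases he : p ≤ e <;> norm_num [ht, he]
  · rw [abs_of_neg (by linarith)]; field_simp; ring
  · rw [abs_of_nonneg (by linarith)]; field_simp; ring

section Classifier

variable {𝒳 : Type*} [MeasurableSpace 𝒳] {P : Measure (𝒳 × ℝ)} {η : 𝒳 → ℝ}

lemma measureReal_snd_eq_neg_one [IsFiniteMeasure P] (hsupp : ∀ᵐ z ∂P, z.2 = 1 ∨ z.2 = -1)
    (hη : ∀ B : Set 𝒳, MeasurableSet B →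
      P.real {z | z.1 ∈ B ∧ z.2 = 1} = ∫ x in B, η x ∂(P.map Prod.fst))
    (hηint : Integrable η (P.map Prod.fst)) {B : Set 𝒳} (hB : MeasurableSet B) :
    P.real {z | z.1 ∈ B ∧ z.2 = -1} = ∫ x in B, (1 - η x) ∂(P.map Prod.fst) := by
  rw [integral_sub (integrable_const 1).integrableOn hηint.integrableOn, setIntegral_const,
    smul_eq_mul, mul_one, ← hη B hB, measureReal_map_fst_eq_add (by norm_num) hsupp hB]
  ring

lemma integrable_condBalancedRisk [IsFiniteMeasure P] (hηint : Integrable η (P.map Prod.fst))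
    (p : ℝ) {f : 𝒳 → ℝ} (hf : Measurable f) :
    Integrable (fun x => condBalancedRisk p (η x) (f x)) (P.map Prod.fst) := by
  have hneg : Integrable (fun x => (1 - η x) / (1 - p)) (P.map Prod.fst) :=
    ((integrable_const 1).sub hηint).div_const _
  rw [condBalancedRisk_comp_eq_piecewise]
  exact Integrable.piecewise (measurableSet_le measurable_const hf) hneg.integrableOn
    (hηint.div_const p).integrableOn

lemma rbal_sgn_eq_integral [IsFiniteMeasure P] (hsupp : ∀ᵐ z ∂P, z.2 = 1 ∨ z.2 = -1)
    (hη : ∀ B : Set 𝒳, MeasurableSet B →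
      P.real {z | z.1 ∈ B ∧ z.2 = 1} = ∫ x in B, η x ∂(P.map Prod.fst))
    (hηint : Integrable η (P.map Prod.fst)) (p : ℝ) {f : 𝒳 → ℝ} (hf : Measurable f) :
    Rbal P p (fun x => sgn (f x)) = ∫ x, condBalancedRisk p (η x) (f x) ∂(P.map Prod.fst) := by
  have hA : MeasurableSet {x | 0 ≤ f x} := measurableSet_le measurable_const hf
  have herr_pos : {z : 𝒳 × ℝ | sgn (f z.1) ≠ z.2 ∧ z.2 = 1} =
      {z | z.1 ∈ {x | 0 ≤ f x}ᶜ ∧ z.2 = 1} := by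
    ext z
    simp only [Set.mem_ofPred_eq, Set.mem_compl_iff, not_le]
    exact ⟨fun ⟨h, h1⟩ => ⟨sgn_ne_one_iff.1 (h1 ▸ h), h1⟩,
      fun ⟨h, h1⟩ => ⟨h1 ▸ sgn_ne_one_iff.2 h, h1⟩⟩
  have herr_neg : {z : 𝒳 × ℝ | sgn (f z.1) ≠ z.2 ∧ z.2 = -1} =
      {z | z.1 ∈ {x | 0 ≤ f x} ∧ z.2 = -1} := by
    ext z
    simp only [Set.mem_ofPred_eq]
    exact ⟨fun ⟨h, h1⟩ => ⟨sgn_ne_neg_one_iff.1 (h1 ▸ h), h1⟩,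
      fun ⟨h, h1⟩ => ⟨h1 ▸ sgn_ne_neg_one_iff.2 h, h1⟩⟩
  have hneg : Integrable (fun x => (1 - η x) / (1 - p)) (P.map Prod.fst) :=
    ((integrable_const 1).sub hηint).div_const _
  simp only [Rbal, ← measureReal_def]
  rw [herr_pos, herr_neg, hη _ hA.compl, measureReal_snd_eq_neg_one hsupp hη hηint hA,
    condBalancedRisk_comp_eq_piecewise, integral_piecewise hA hneg.integrableOn
      (hηint.div_const p).integrableOn, integral_div, integral_div, add_comm]

end Classifier

theorem stmt_16_general {𝒳 : Type*} [MeasurableSpace 𝒳] (P : Measure (𝒳 × ℝ))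
    [IsProbabilityMeasure P]
    (hsupp : P {z | z.2 = 1 ∨ z.2 = -1} = 1)
    (p : ℝ) (hp0 : 0 < p) (hp1 : p < 1)
    -- `η` is a regular conditional probability of `{Y = 1}` given `X`
    (η : 𝒳 → ℝ) (hη01 : ∀ x, 0 ≤ η x ∧ η x ≤ 1) (hηmeas : Measurable η)
    (hη : ∀ B : Set 𝒳, MeasurableSet B →
      (P {z | z.1 ∈ B ∧ z.2 = 1}).toReal = ∫ x in B, η x ∂(P.map Prod.fst))
    (ν : 𝒳 → ℝ) (hν : Measurable ν) :
    Rbal P p (fun x => sgn (ν x - 1)) - Rbal P p (fun x => sgn (η x / p - 1)) =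
      ∫ x, ({x | sgn (ν x - 1) ≠ sgn (η x / p - 1)}.indicator
        (fun x => |η x - p| / (p * (1 - p))) x) ∂(P.map Prod.fst) := by
  have hsupp_ae : ∀ᵐ z ∂P, z.2 = 1 ∨ z.2 = -1 :=
    (prob_compl_eq_zero_iff ((measurable_snd (measurableSet_singleton 1)).union
      (measurable_snd (measurableSet_singleton (-1))))).2 hsupp
  have hηint : Integrable η (P.map Prod.fst) :=
    Integrable.of_bound hηmeas.aestronglyMeasurable 1 (ae_of_all _ fun x => by
      rw [Real.norm_eq_abs, abs_le]; constructor <;> linarith [hη01 x])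
  have hfν : Measurable fun x => ν x - 1 := hν.sub_const 1
  have hfη : Measurable fun x => η x / p - 1 := (hηmeas.div_const p).sub_const 1
  rw [rbal_sgn_eq_integral hsupp_ae hη hηint p hfν, rbal_sgn_eq_integral hsupp_ae hη hηint p hfη,
    ← integral_sub (integrable_condBalancedRisk hηint p hfν)
      (integrable_condBalancedRisk hηint p hfη)]
  simp only [condBalancedRisk_sub_bayes hp0 hp1, Set.indicator_apply, Set.mem_ofPred_eq]

/-- Lemma: exact expression of the excess balanced risk of a plug-in
classifier `g = sign(ν − 1)` relative to the balanced Bayes classifier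
`g*_p = sign(η/p − 1)`. -/
theorem stmt_16 {𝒳 : Type*} [MeasurableSpace 𝒳] (P : Measure (𝒳 × ℝ))
    [IsProbabilityMeasure P]
    (hsupp : P {z | z.2 = 1 ∨ z.2 = -1} = 1)
    (p : ℝ) (hp : p = pPos P) (hp0 : 0 < p) (hp1 : p < 1)
    -- `η` is a regular conditional probability of `{Y = 1}` given `X`
    (η : 𝒳 → ℝ) (hη01 : ∀ x, 0 ≤ η x ∧ η x ≤ 1) (hηmeas : Measurable η)
    (hη : ∀ B : Set 𝒳, MeasurableSet B →
      (P {z | z.1 ∈ B ∧ z.2 = 1}).toReal = ∫ x in B, η x ∂(P.map Prod.fst))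
    (ν : 𝒳 → ℝ) (hν : Measurable ν) :
    Rbal P p (fun x => sgn (ν x - 1)) - Rbal P p (fun x => sgn (η x / p - 1)) =
      ∫ x, ({x | sgn (ν x - 1) ≠ sgn (η x / p - 1)}.indicator
        (fun x => |η x - p| / (p * (1 - p))) x) ∂(P.map Prod.fst) :=
  stmt_16_general P hsupp p hp0 hp1 η hη01 hηmeas hη ν hν

end
end

section
/- Assume p ≤ 1/2 and set ν*(x) = η(x)/p. Then for every measurable ν : 𝒳 → ℝ (with E[|ν(X)|] < ∞), the classifier g(x) = sign(ν(x) − 1) satisfies R_bal(g) − R_bal(g*_p) ≤ 2·E[ |ν(X) − ν*(X)| ], where g*_p is the balanced Bayes classifier. -/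
open MeasureTheory

noncomputable section

lemma ite_div_sub_ite_div_le_two_mul_abs_sub {q : ℝ} (hq : 1 / 2 ≤ q) (a b : ℝ) :
    (if 0 ≤ b then b / q else 0) - (if 0 ≤ a then b / q else 0) ≤ 2 * |a - b| := by
  have hq0 : 0 < q := by linarith
  split_ifs with hb ha ha
  · simp
  · rw [sub_zero, abs_of_neg (by linarith), div_le_iff₀ hq0]
    nlinarith
  · rw [zero_sub, abs_of_nonneg (by linarith), ← neg_div, div_le_iff₀ hq0]
    nlinarith
  · simp

section

variable {𝒳 : Type*} [MeasurableSpace 𝒳]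

lemma setIntegral_div_sub_setIntegral_div_le_two_mul_integral_abs_sub {μ : Measure 𝒳}
    {a b : 𝒳 → ℝ} {q : ℝ} (hq : 1 / 2 ≤ q) (ha : Measurable a) (hb : Measurable b)
    (hai : Integrable a μ) (hbi : Integrable b μ) :
    ∫ x in {x | 0 ≤ b x}, b x / q ∂μ - ∫ x in {x | 0 ≤ a x}, b x / q ∂μ ≤
      2 * ∫ x, |a x - b x| ∂μ := by
  have hA : MeasurableSet {x | 0 ≤ a x} := measurableSet_le measurable_const ha
  have hB : MeasurableSet {x | 0 ≤ b x} := measurableSet_le measurable_const hb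
  have hdiv : Integrable (fun x => b x / q) μ := hbi.div_const q
  rw [← integral_indicator hA, ← integral_indicator hB,
    ← integral_sub (hdiv.indicator hB) (hdiv.indicator hA), ← integral_const_mul]
  refine integral_mono ((hdiv.indicator hB).sub (hdiv.indicator hA))
    ((hai.sub hbi).abs.const_mul 2) fun x => ?_
  simpa only [Pi.sub_apply, Set.indicator_apply, Set.mem_ofPred_eq]
    using ite_div_sub_ite_div_le_two_mul_abs_sub hq (a x) (b x)

variable {P : Measure (𝒳 × ℝ)} {η : 𝒳 → ℝ}

lemma toReal_measure_fst_mem_snd_eq_neg_one [IsFiniteMeasure P]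
    (hsupp : ∀ᵐ z ∂P, z.2 = 1 ∨ z.2 = -1) (hηint : Integrable η (P.map Prod.fst))
    (hη : ∀ B : Set 𝒳, MeasurableSet B →
      (P {z | z.1 ∈ B ∧ z.2 = 1}).toReal = ∫ x in B, η x ∂(P.map Prod.fst))
    {B : Set 𝒳} (hB : MeasurableSet B) :
    (P {z | z.1 ∈ B ∧ z.2 = -1}).toReal = ∫ x in B, (1 - η x) ∂(P.map Prod.fst) := by
  have hB2 : MeasurableSet {z : 𝒳 × ℝ | z.1 ∈ B ∧ z.2 = -1} :=
    (hB.preimage measurable_fst).inter ((measurableSet_singleton (-1)).preimage measurable_snd)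
  have hdisj : Disjoint {z : 𝒳 × ℝ | z.1 ∈ B ∧ z.2 = 1} {z | z.1 ∈ B ∧ z.2 = -1} :=
    Set.disjoint_left.2 fun z h1 h2 => by norm_num [h1.2] at h2
  have hunion : ({z | z.1 ∈ B ∧ z.2 = 1} ∪ {z | z.1 ∈ B ∧ z.2 = -1} : Set (𝒳 × ℝ))
      =ᵐ[P] {z | z.1 ∈ B} := by
    filter_upwards [hsupp] with z hz
    exact propext ⟨fun h => h.elim And.left And.left, fun h => hz.imp (⟨h, ·⟩) (⟨h, ·⟩)⟩
  have hsum : (P {z | z.1 ∈ B ∧ z.2 = 1}).toReal + (P {z | z.1 ∈ B ∧ z.2 = -1}).toReal =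
      (P.map Prod.fst).real B := by
    rw [← ENNReal.toReal_add (measure_ne_top P _) (measure_ne_top P _),
      ← measure_union hdisj hB2, measure_congr hunion, measureReal_def,
      Measure.map_apply measurable_fst hB]
    rfl
  rw [integral_sub (integrable_const 1).integrableOn hηint.integrableOn,
    setIntegral_const, smul_eq_mul, mul_one, ← hη B hB]
  linarith

lemma Rbal_sgn_comp [IsFiniteMeasure P]
    (hsupp : ∀ᵐ z ∂P, z.2 = 1 ∨ z.2 = -1) (hηint : Integrable η (P.map Prod.fst))
    (hη : ∀ B : Set 𝒳, MeasurableSet B →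
      (P {z | z.1 ∈ B ∧ z.2 = 1}).toReal = ∫ x in B, η x ∂(P.map Prod.fst))
    {p : ℝ} (hp0 : p ≠ 0) (hp1 : 1 - p ≠ 0) {f : 𝒳 → ℝ} (hf : Measurable f) :
    Rbal P p (fun x => sgn (f x)) = ∫ x, η x / p ∂(P.map Prod.fst) -
      ∫ x in {x | 0 ≤ f x}, (η x / p - 1) / (1 - p) ∂(P.map Prod.fst) := by
  set A := {x | 0 ≤ f x}
  have hA : MeasurableSet A := measurableSet_le measurable_const hf
  have herr1 : {z : 𝒳 × ℝ | sgn (f z.1) ≠ z.2 ∧ z.2 = 1} = {z | z.1 ∈ Aᶜ ∧ z.2 = 1} := by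
    ext z
    simp +contextual only [Set.mem_ofPred_eq, Set.mem_compl_iff, A, not_le, and_congr_left_iff,
      sgn_ne_one_iff, implies_true]
  have herr2 : {z : 𝒳 × ℝ | sgn (f z.1) ≠ z.2 ∧ z.2 = -1} = {z | z.1 ∈ A ∧ z.2 = -1} := by
    ext z
    simp +contextual only [Set.mem_ofPred_eq, A, and_congr_left_iff, sgn_ne_neg_one_iff,
      implies_true]
  have hregret : ∫ x in A, (η x / p - 1) / (1 - p) ∂(P.map Prod.fst) =
      ∫ x in A, η x / p ∂(P.map Prod.fst) - ∫ x in A, (1 - η x) / (1 - p) ∂(P.map Prod.fst) := by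
    have hint : Integrable (fun x => (1 - η x) / (1 - p)) (P.map Prod.fst) :=
      ((integrable_const 1).sub hηint).div_const (1 - p)
    rw [← integral_sub (hηint.div_const p).integrableOn hint.integrableOn]
    refine integral_congr_ae (ae_of_all _ fun x => ?_)
    field_simp
    ring
  rw [Rbal, herr1, herr2, hη _ hA.compl,
    toReal_measure_fst_mem_snd_eq_neg_one hsupp hηint hη hA, hregret,
    ← integral_add_compl hA (hηint.div_const p)]
  simp only [integral_div]
  ring

end

theorem stmt_17_general {𝒳 : Type*} [MeasurableSpace 𝒳] (P : Measure (𝒳 × ℝ))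
    [IsProbabilityMeasure P]
    (hsupp : P {z | z.2 = 1 ∨ z.2 = -1} = 1)
    (p : ℝ) (hp0 : 0 < p) (hp2 : p ≤ 1 / 2)
    -- `η` is a regular conditional probability of `{Y = 1}` given `X`
    (η : 𝒳 → ℝ) (hη01 : ∀ x, 0 ≤ η x ∧ η x ≤ 1) (hηmeas : Measurable η)
    (hη : ∀ B : Set 𝒳, MeasurableSet B →
      (P {z | z.1 ∈ B ∧ z.2 = 1}).toReal = ∫ x in B, η x ∂(P.map Prod.fst))
    (ν : 𝒳 → ℝ) (hν : Measurable ν) (hνint : Integrable ν (P.map Prod.fst)) :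
    Rbal P p (fun x => sgn (ν x - 1)) - Rbal P p (fun x => sgn (η x / p - 1)) ≤
      2 * ∫ x, |ν x - η x / p| ∂(P.map Prod.fst) := by
  have : IsProbabilityMeasure (P.map Prod.fst) :=
    Measure.isProbabilityMeasure_map measurable_fst.aemeasurable
  have hsupp' : ∀ᵐ z ∂P, z.2 = 1 ∨ z.2 = -1 := by
    refine (ae_iff_measure_eq ?_).2 (by rw [hsupp, measure_univ])
    exact (((measurableSet_singleton 1).preimage measurable_snd).union
      ((measurableSet_singleton (-1)).preimage measurable_snd)).nullMeasurableSet
  have hηint : Integrable η (P.map Prod.fst) :=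
    (integrable_const 1).mono' hηmeas.aestronglyMeasurable (ae_of_all _ fun x => by
      rw [Real.norm_eq_abs, abs_of_nonneg (hη01 x).1]; exact (hη01 x).2)
  have hp1 : 1 - p ≠ 0 := by linarith
  have hcompare := setIntegral_div_sub_setIntegral_div_le_two_mul_integral_abs_sub
    (by linarith : 1 / 2 ≤ 1 - p) (hν.sub_const 1) ((hηmeas.div_const p).sub_const 1)
    (hνint.sub (integrable_const 1)) ((hηint.div_const p).sub (integrable_const 1))
  simp only [sub_sub_sub_cancel_right] at hcompare
  rw [Rbal_sgn_comp hsupp' hηint hη hp0.ne' hp1 (hν.sub_const 1),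
    Rbal_sgn_comp hsupp' hηint hη hp0.ne' hp1 ((hηmeas.div_const p).sub_const 1)]
  linarith

/-- Lemma: comparison bound for the excess balanced risk of a
plug-in classifier, when `p ≤ 1/2`. -/
theorem stmt_17 {𝒳 : Type*} [MeasurableSpace 𝒳] (P : Measure (𝒳 × ℝ))
    [IsProbabilityMeasure P]
    (hsupp : P {z | z.2 = 1 ∨ z.2 = -1} = 1)
    (p : ℝ) (hp : p = pPos P) (hp0 : 0 < p) (hp2 : p ≤ 1 / 2)
    -- `η` is a regular conditional probability of `{Y = 1}` given `X`
    (η : 𝒳 → ℝ) (hη01 : ∀ x, 0 ≤ η x ∧ η x ≤ 1) (hηmeas : Measurable η)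
    (hη : ∀ B : Set 𝒳, MeasurableSet B →
      (P {z | z.1 ∈ B ∧ z.2 = 1}).toReal = ∫ x in B, η x ∂(P.map Prod.fst))
    (ν : 𝒳 → ℝ) (hν : Measurable ν) (hνint : Integrable ν (P.map Prod.fst)) :
    Rbal P p (fun x => sgn (ν x - 1)) - Rbal P p (fun x => sgn (η x / p - 1)) ≤
      2 * ∫ x, |ν x - η x / p| ∂(P.map Prod.fst) :=
  stmt_17_general P hsupp p hp0 hp2 η hη01 hηmeas hη ν hν hνint

end
end
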